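/- arXiv:1611.03571 — 8 statements merged into one kernel-verified Lean document; each statement's English description precedes it below -/
import Mathlib

section
/- For every real α with 0 < α < 1, 2∫₀^∞ arctan(αx)/(1+x²) dx = log α · log((1-α)/(1+α)) + Li₂(α) - Li₂(-α). -/
open MeasureTheory Real

noncomputable def Li2 (x : ℝ) : ℝ := ∑' n : ℕ, x ^ (n + 1) / ((n : ℝ) + 1) ^ 2

/-!
Since `arctan (α x) = ∫₀^α x / (1 + t²x²) dt` and the integrand is nonnegative, Fubini turns
`∫₀^∞ arctan (α x) / (1 + x²) dx` into `∫₀^α (-log t) / (1 - t²) dt`: by partial fractions,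
`∫₀^∞ x / ((1 + t²x²)(1 + x²)) dx = -log t / (1 - t²)`. Expanding `1 / (1 - t²)` geometrically and
integrating termwise with `∫₀^α (-log t) t^(2k) dt = α^(2k+1) (-log α / (2k+1) + 1 / (2k+1)²)`
produces the series `artanh α = (log (1 + α) - log (1 - α)) / 2` and `(Li₂ α - Li₂ (-α)) / 2`.
-/

open Set Filter Topology

lemma summable_Li2_terms {x : ℝ} (hx : |x| ≤ 1) :
    Summable fun n : ℕ => x ^ (n + 1) / ((n : ℝ) + 1) ^ 2 := by
  have hp : Summable fun n : ℕ => 1 / ((n : ℝ) + 1) ^ 2 := by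
    simpa using (summable_nat_add_iff 1).mpr (Real.summable_one_div_nat_pow.mpr one_lt_two)
  refine .of_norm_bounded hp fun n => ?_
  rw [norm_div, norm_pow, norm_pow, Real.norm_eq_abs, Real.norm_of_nonneg (by positivity)]
  gcongr
  exact pow_le_one₀ (abs_nonneg x) hx

lemma hasSum_Li2_sub_Li2_neg {x : ℝ} (hx : |x| ≤ 1) :
    HasSum (fun k : ℕ => 2 * x ^ (2 * k + 1) / (2 * (k : ℝ) + 1) ^ 2) (Li2 x - Li2 (-x)) := by
  set term := fun n : ℕ =>
    x ^ (n + 1) / ((n : ℝ) + 1) ^ 2 - (-x) ^ (n + 1) / ((n : ℝ) + 1) ^ 2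
  have hterm : HasSum term (Li2 x - Li2 (-x)) :=
    (summable_Li2_terms hx).hasSum.sub (summable_Li2_terms (by rwa [abs_neg])).hasSum
  have hodd : term ∘ (2 * ·) = fun k : ℕ => 2 * x ^ (2 * k + 1) / (2 * (k : ℝ) + 1) ^ 2 := by
    ext k
    simp only [term, Function.comp, Odd.neg_pow ⟨k, rfl⟩]
    push_cast
    ring
  rw [← hodd, (mul_right_injective₀ (two_ne_zero' ℕ)).hasSum_iff]
  · exact hterm
  · intro n hn
    rw [range_two_mul, mem_ofPred_eq, ← Nat.even_add_one] at hn
    simp only [term, Even.neg_pow hn, sub_self]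

lemma integral_Ioc_div_one_add_mul_sq (x : ℝ) {α : ℝ} (hα : 0 ≤ α) :
    ∫ t in Ioc 0 α, x / (1 + (t * x) ^ 2) = arctan (α * x) := by
  have hderiv (t : ℝ) : HasDerivAt (fun t => arctan (t * x)) (x / (1 + (t * x) ^ 2)) t := by
    simpa [one_div, div_eq_inv_mul] using (hasDerivAt_mul_const x).arctan
  have hcont : Continuous fun t : ℝ => x / (1 + (t * x) ^ 2) :=
    continuous_const.div (by fun_prop) fun t => by positivity
  rw [← intervalIntegral.integral_of_le hα,
    intervalIntegral.integral_eq_sub_of_hasDerivAt (fun t _ => hderiv t)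
      (hcont.intervalIntegrable _ _)]
  simp

lemma integrableOn_neg_log_mul_pow (n : ℕ) (α : ℝ) :
    IntegrableOn (fun t => -log t * t ^ n) (Ioc 0 α) :=
  (intervalIntegral.intervalIntegrable_log'.neg.mul_continuousOn (continuous_pow n).continuousOn).1

lemma integral_neg_log_mul_pow (n : ℕ) {α : ℝ} (hα : 0 ≤ α) :
    ∫ t in Ioc 0 α, -log t * t ^ n
      = α ^ (n + 1) * -log α / (n + 1) + α ^ (n + 1) / ((n : ℝ) + 1) ^ 2 := by
  have hn : (n : ℝ) + 1 ≠ 0 := by positivity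
  -- written with `t * log t` so that continuity at `0` is `continuous_mul_log`
  set F : ℝ → ℝ := fun t => t ^ (n + 1) / ((n : ℝ) + 1) ^ 2 - t ^ n * (t * log t) / (n + 1)
  have hcont : Continuous F := by
    have := Real.continuous_mul_log
    fun_prop
  have hderiv : ∀ t ∈ Ioo 0 α, HasDerivAt F (-log t * t ^ n) t := by
    intro t ht
    have hpow : HasDerivAt (fun t : ℝ => t ^ (n + 1)) (((n : ℝ) + 1) * t ^ n) t := by
      simpa using hasDerivAt_pow (n + 1) t
    have hF : F = fun t => t ^ (n + 1) / ((n : ℝ) + 1) ^ 2 - t ^ (n + 1) * log t / (n + 1) := by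
      funext s; simp only [F]; ring
    rw [hF]
    refine ((hpow.div_const _).sub
      ((hpow.mul (hasDerivAt_log ht.1.ne')).div_const _)).congr_deriv ?_
    have := ht.1.ne'
    field_simp
    ring
  rw [← intervalIntegral.integral_of_le hα,
    intervalIntegral.integral_eq_sub_of_hasDerivAt_of_le hα hcont.continuousOn hderiv
      ((intervalIntegrable_iff_integrableOn_Ioc_of_le hα).2 (integrableOn_neg_log_mul_pow n α))]
  simp only [F]
  field_simp
  ring

lemma tendsto_one_add_sq_div_one_add_mul_sq {t : ℝ} (ht : t ≠ 0) :
    Tendsto (fun x : ℝ => (1 + x ^ 2) / (1 + (t * x) ^ 2)) atTop (𝓝 (t ^ 2)⁻¹) := by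
  have hinv : Tendsto (fun x : ℝ => (x ^ 2)⁻¹) atTop (𝓝 0) :=
    (tendsto_pow_atTop two_ne_zero).inv_tendsto_atTop
  have hlim := (hinv.add_const 1).div (hinv.add_const (t ^ 2)) (by positivity)
  rw [zero_add, zero_add, one_div] at hlim
  refine hlim.congr' ?_
  filter_upwards [eventually_ne_atTop 0] with x hx
  simp only [Pi.div_apply]
  field_simp

lemma integral_Ioi_div_one_add_mul_sq_mul_one_add_sq {t : ℝ} (ht0 : 0 < t) (ht1 : t ≠ 1) :
    ∫ x in Ioi 0, x / ((1 + (t * x) ^ 2) * (1 + x ^ 2)) = -log t / (1 - t ^ 2) := by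
  have ht2 : 1 - t ^ 2 ≠ 0 := by
    rw [sub_ne_zero, ne_comm, Ne, pow_eq_one_iff_of_nonneg ht0.le two_ne_zero]
    exact ht1
  set G : ℝ → ℝ := fun x => (log (1 + x ^ 2) - log (1 + (t * x) ^ 2)) / (2 * (1 - t ^ 2))
  have hderiv : ∀ x ∈ Ici 0, HasDerivAt G (x / ((1 + (t * x) ^ 2) * (1 + x ^ 2))) x := by
    intro x _
    have h1 : HasDerivAt (fun x : ℝ => 1 + x ^ 2) (2 * x) x := by
      simpa using (hasDerivAt_pow 2 x).const_add 1
    have h2 : HasDerivAt (fun x : ℝ => 1 + (t * x) ^ 2) (2 * t ^ 2 * x) x := by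
      refine (((hasDerivAt_id x).const_mul t).pow 2 |>.const_add 1).congr_deriv ?_
      simp only [id, Nat.cast_ofNat]
      ring
    refine (((h1.log (by positivity)).sub (h2.log (by positivity))).div_const _).congr_deriv ?_
    field_simp
    ring
  have hnonneg : ∀ x ∈ Ioi (0 : ℝ), 0 ≤ x / ((1 + (t * x) ^ 2) * (1 + x ^ 2)) := by
    intro x hx
    have : 0 < x := hx
    positivity
  have hG : Tendsto G atTop (𝓝 (log (t ^ 2)⁻¹ / (2 * (1 - t ^ 2)))) := by
    have hlog := ((continuousAt_log (by positivity)).tendsto.comp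
      (tendsto_one_add_sq_div_one_add_mul_sq ht0.ne')).div_const (2 * (1 - t ^ 2))
    refine hlog.congr fun x => ?_
    rw [Function.comp_apply, log_div (by positivity) (by positivity)]
  rw [integral_Ioi_of_hasDerivAt_of_nonneg' hderiv hnonneg hG]
  simp only [G, log_inv, log_pow, Nat.cast_ofNat, ne_eq, OfNat.ofNat_ne_zero, not_false_eq_true,
    zero_pow, add_zero, log_one, mul_zero, sub_self, zero_div, sub_zero]
  field_simp

lemma integral_arctan_mul_div_one_add_sq_eq_integral_integral {α : ℝ} (hα : 0 ≤ α) :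
    ∫ x in Ioi 0, arctan (α * x) / (1 + x ^ 2)
      = ∫ t in Ioc 0 α, ∫ x in Ioi 0, x / ((1 + (t * x) ^ 2) * (1 + x ^ 2)) := by
  set f : ℝ → ℝ → ℝ := fun x t => x / ((1 + (t * x) ^ 2) * (1 + x ^ 2))
  have hinner (x : ℝ) : ∫ t in Ioc 0 α, f x t = arctan (α * x) / (1 + x ^ 2) := by
    simp only [f, ← div_div, integral_div, integral_Ioc_div_one_add_mul_sq x hα]
  have hcont : Continuous (Function.uncurry f) :=
    continuous_fst.div (by fun_prop) fun p => by positivity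
  have hint : Integrable (Function.uncurry f)
      ((volume.restrict (Ioi 0)).prod (volume.restrict (Ioc 0 α))) := by
    rw [integrable_prod_iff hcont.aestronglyMeasurable]
    refine ⟨.of_forall fun x => (hcont.comp (Continuous.prodMk_right x)).integrableOn_Ioc, ?_⟩
    refine (integrable_inv_one_add_sq.restrict.const_mul (π / 2)).mono'
      hcont.aestronglyMeasurable.norm.integral_prod_right' ?_
    filter_upwards [ae_restrict_mem measurableSet_Ioi] with x hx
    have hnonneg (t : ℝ) : 0 ≤ f x t := by
      have : 0 < x := hx
      positivity
    simp only [Function.uncurry_apply_pair, Real.norm_of_nonneg (hnonneg _)]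
    rw [Real.norm_of_nonneg (integral_nonneg hnonneg), hinner, div_eq_mul_inv]
    gcongr
    exact (arctan_lt_pi_div_two _).le
  rw [← integral_integral_swap hint]
  exact setIntegral_congr_fun measurableSet_Ioi fun x _ => (hinner x).symm

lemma hasSum_integral_neg_log_mul_pow_two_mul {α : ℝ} (h0 : 0 < α) (h1 : α < 1) :
    HasSum (fun k : ℕ => ∫ t in Ioc 0 α, -log t * t ^ (2 * k))
      (-log α / 2 * (log (1 + α) - log (1 - α)) + (Li2 α - Li2 (-α)) / 2) := by
  have habs : |α| < 1 := by rwa [abs_of_pos h0]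
  refine (((hasSum_log_sub_log_of_abs_lt_one habs).mul_left (-log α / 2)).add
    ((hasSum_Li2_sub_Li2_neg habs.le).div_const 2)).congr_fun fun k => ?_
  rw [integral_neg_log_mul_pow _ h0.le]
  push_cast
  ring

lemma integral_neg_log_div_one_sub_sq {α : ℝ} (h0 : 0 < α) (h1 : α < 1) :
    ∫ t in Ioc 0 α, -log t / (1 - t ^ 2)
      = -log α / 2 * (log (1 + α) - log (1 - α)) + (Li2 α - Li2 (-α)) / 2 := by
  have hgeom : ∀ t ∈ Ioc 0 α, -log t / (1 - t ^ 2) = ∑' k : ℕ, -log t * t ^ (2 * k) := by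
    intro t ht
    have hsq : t ^ 2 < 1 := by nlinarith [ht.1, ht.2]
    simp only [pow_mul, tsum_mul_left, tsum_geometric_of_lt_one (sq_nonneg t) hsq, div_eq_mul_inv]
  have hnonneg (k : ℕ) : ∀ t ∈ Ioc 0 α, 0 ≤ -log t * t ^ (2 * k) := fun t ht =>
    mul_nonneg (neg_nonneg.2 (log_nonpos ht.1.le (ht.2.trans h1.le))) (pow_nonneg ht.1.le _)
  have hsum := hasSum_integral_neg_log_mul_pow_two_mul h0 h1
  have hnorm (k : ℕ) :
      ∫ t in Ioc 0 α, ‖-log t * t ^ (2 * k)‖ = ∫ t in Ioc 0 α, -log t * t ^ (2 * k) :=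
    setIntegral_congr_fun measurableSet_Ioc fun t ht => Real.norm_of_nonneg (hnonneg k t ht)
  rw [setIntegral_congr_fun measurableSet_Ioc hgeom]
  exact (hasSum_integral_of_summable_integral_norm (fun k => integrableOn_neg_log_mul_pow _ α)
    (by simpa only [hnorm] using hsum.summable)).unique hsum

theorem stmt0 (α : ℝ) (h0 : 0 < α) (h1 : α < 1) :
    2 * ∫ x in Set.Ioi (0 : ℝ), Real.arctan (α * x) / (1 + x ^ 2) =
      Real.log α * Real.log ((1 - α) / (1 + α)) + Li2 α - Li2 (-α) := by
  have hinner : ∀ t ∈ Ioc 0 α, ∫ x in Ioi 0, x / ((1 + (t * x) ^ 2) * (1 + x ^ 2))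
      = -log t / (1 - t ^ 2) := fun t ht =>
    integral_Ioi_div_one_add_mul_sq_mul_one_add_sq ht.1 (ht.2.trans_lt h1).ne
  rw [integral_arctan_mul_div_one_add_sq_eq_integral_integral h0.le,
    setIntegral_congr_fun measurableSet_Ioc hinner, integral_neg_log_div_one_sub_sq h0 h1,
    log_div (by linarith) (by linarith)]
  ring
end

section
/- For every natural n ≥ 0, ∫₀¹ x^{2n+1}/(1+x²) dx = (-1)ⁿ(log 2 - Hₙ⁻)/2, where Hₙ⁻ = ∑_{k=1}^n (-1)^{k-1}/k is the n-th skew-harmonic number (H₀⁻ = 0). -/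
open MeasureTheory Real

noncomputable def skewH (n : ℕ) : ℝ := ∑ k ∈ Finset.range n, (-1) ^ k / ((k : ℝ) + 1)

/-! Since `x ^ (m + 2) / (1 + x ^ 2) = x ^ m - x ^ m / (1 + x ^ 2)`, the integrals
`I m = ∫₀¹ x ^ m / (1 + x ^ 2)` satisfy `I (m + 2) = 1 / (m + 1) - I m`; starting from
`I 1 = log 2 / 2`, this alternating recursion unrolls into the skew-harmonic sum. -/

lemma skewH_succ (n : ℕ) : skewH (n + 1) = skewH n + (-1) ^ n / ((n : ℝ) + 1) :=
  Finset.sum_range_succ _ _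

lemma continuous_pow_div_one_add_sq (m : ℕ) : Continuous fun x : ℝ => x ^ m / (1 + x ^ 2) :=
  (continuous_pow m).div (continuous_const.add (continuous_pow 2)) fun x => by positivity

lemma integral_id_div_one_add_sq (a b : ℝ) :
    ∫ x in a..b, x / (1 + x ^ 2) = (log (1 + b ^ 2) - log (1 + a ^ 2)) / 2 := by
  have hderiv : ∀ x ∈ Set.uIcc a b,
      HasDerivAt (fun x : ℝ => log (1 + x ^ 2) / 2) (x / (1 + x ^ 2)) x := by
    intro x _
    have h := (((hasDerivAt_pow 2 x).const_add 1).log (by positivity)).div_const 2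
    exact h.congr_deriv (by norm_num; ring)
  rw [intervalIntegral.integral_eq_sub_of_hasDerivAt hderiv
    (by simpa using (continuous_pow_div_one_add_sq 1).intervalIntegrable a b)]
  ring

lemma integral_pow_add_two_div_one_add_sq (m : ℕ) :
    ∫ x in (0:ℝ)..1, x ^ (m + 2) / (1 + x ^ 2) =
      1 / ((m : ℝ) + 1) - ∫ x in (0:ℝ)..1, x ^ m / (1 + x ^ 2) := by
  have hsplit : ∀ x : ℝ, x ^ (m + 2) / (1 + x ^ 2) = x ^ m - x ^ m / (1 + x ^ 2) := by
    intro x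
    field_simp
    ring
  simp only [hsplit]
  rw [intervalIntegral.integral_sub ((continuous_pow m).intervalIntegrable 0 1)
    ((continuous_pow_div_one_add_sq m).intervalIntegrable 0 1), integral_pow]
  norm_num

theorem stmt2 (n : ℕ) :
    ∫ x in (0:ℝ)..1, x ^ (2 * n + 1) / (1 + x ^ 2) =
      (-1) ^ n * (Real.log 2 - skewH n) / 2 := by
  induction n with
  | zero => simpa [skewH, one_add_one_eq_two] using integral_id_div_one_add_sq 0 1
  | succ n ih =>
    rw [show 2 * (n + 1) + 1 = 2 * n + 1 + 2 by ring, integral_pow_add_two_div_one_add_sq, ih,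
      skewH_succ, pow_succ]
    have hsq : (-1 : ℝ) ^ (n * 2) = 1 := Even.neg_one_pow ⟨n, by ring⟩
    push_cast
    field_simp
    linear_combination (-(2 * (n : ℝ) + 2)) * hsq
end

section
/- π²/16 = ∑_{n=0}^∞ (log 2 - Hₙ⁻)/(2n+1), where Hₙ⁻ = ∑_{k=1}^n (-1)^{k-1}/k (H₀⁻ = 0). -/
/-!
Write `I m t = ∫₀ᵗ s^m / (1 + s²) ds`. Since `I (m+2) t + I m t = t^(m+1)/(m+1)` and `I ≥ 0`,
the recursion gives both `log 2 - Hₙ⁻ = 2 (-1)ⁿ I (2n+1) 1` (from `2 I 1 1 = log 2`) and the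
Taylor expansion of `arctan t = I 0 t` with remainder `± I (2N) t ≤ 1/(2N+1)`. Hence the `N`-th
partial sum of the series is `∫₀¹ 2 T_N(t)/(1+t²) dt` for the Taylor polynomial `T_N` of
`arctan`, which is within `2/(2N+1)` of `∫₀¹ 2 arctan t/(1+t²) dt = arctan² 1 = π²/16`.
-/

open Real

open Filter Finset intervalIntegral

lemma Continuous.div_one_add_sq {f : ℝ → ℝ} (hf : Continuous f) :
    Continuous fun s => f s / (1 + s ^ 2) :=
  hf.div (by fun_prop) fun s => by positivity

namespace SkewHarmonic

noncomputable def arctanMoment (m : ℕ) (t : ℝ) : ℝ := ∫ s in (0 : ℝ)..t, s ^ m / (1 + s ^ 2)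

noncomputable def arctanTaylor (N : ℕ) (t : ℝ) : ℝ :=
  ∑ n ∈ range N, (-1) ^ n * t ^ (2 * n + 1) / (2 * n + 1)

lemma continuous_pow_div_one_add_sq (m : ℕ) : Continuous fun s : ℝ => s ^ m / (1 + s ^ 2) :=
  (continuous_pow m).div_one_add_sq

lemma continuous_arctanTaylor (N : ℕ) : Continuous (arctanTaylor N) := by
  unfold arctanTaylor
  fun_prop

lemma arctanMoment_nonneg (m : ℕ) {t : ℝ} (ht : 0 ≤ t) : 0 ≤ arctanMoment m t :=
  integral_nonneg ht fun s hs => div_nonneg (pow_nonneg hs.1 m) (by positivity)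

lemma arctanMoment_add_two_add (m : ℕ) (t : ℝ) :
    arctanMoment (m + 2) t + arctanMoment m t = t ^ (m + 1) / (m + 1) := by
  have hsum (s : ℝ) : s ^ (m + 2) / (1 + s ^ 2) + s ^ m / (1 + s ^ 2) = s ^ m := by
    field_simp
    ring
  rw [arctanMoment, arctanMoment, ← integral_add
    ((continuous_pow_div_one_add_sq _).intervalIntegrable _ _)
    ((continuous_pow_div_one_add_sq _).intervalIntegrable _ _)]
  simp [hsum, integral_pow]

lemma arctanMoment_le (m : ℕ) {t : ℝ} (ht : 0 ≤ t) :
    arctanMoment m t ≤ t ^ (m + 1) / (m + 1) := by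
  linarith [arctanMoment_add_two_add m t, arctanMoment_nonneg (m + 2) ht]

lemma arctanMoment_zero (t : ℝ) : arctanMoment 0 t = arctan t := by
  simp [arctanMoment]

lemma arctanMoment_one_one : arctanMoment 1 1 = log 2 / 2 := by
  have hderiv (s : ℝ) : HasDerivAt (fun s => log (1 + s ^ 2) / 2) (s ^ 1 / (1 + s ^ 2)) s := by
    refine ((((hasDerivAt_pow 2 s).const_add 1).log (by positivity)).div_const 2).congr_deriv ?_
    field_simp
    ring
  rw [arctanMoment, integral_eq_sub_of_hasDerivAt (fun s _ => hderiv s)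
    ((continuous_pow_div_one_add_sq 1).intervalIntegrable _ _)]
  norm_num

lemma log_two_sub_skewH (n : ℕ) :
    log 2 - skewH n = (-1) ^ n * (2 * arctanMoment (2 * n + 1) 1) := by
  induction n with
  | zero =>
    simp [skewH, arctanMoment_one_one, mul_div_cancel₀]
  | succ n ih =>
    have hrec :
        2 * (arctanMoment (2 * n + 1 + 2) 1 + arctanMoment (2 * n + 1) 1) = 1 / (n + 1) := by
      rw [arctanMoment_add_two_add]
      field_simp
      push_cast
      ring
    rw [skewH, sum_range_succ, ← skewH, show 2 * (n + 1) + 1 = 2 * n + 1 + 2 by ring]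
    linear_combination ih + (-1) ^ n * hrec

lemma arctan_eq_arctanTaylor_add (N : ℕ) (t : ℝ) :
    arctan t = arctanTaylor N t + (-1) ^ N * arctanMoment (2 * N) t := by
  induction N with
  | zero => simp [arctanTaylor, arctanMoment_zero]
  | succ N ih =>
    have hrec := arctanMoment_add_two_add (2 * N) t
    rw [arctanTaylor, sum_range_succ, ← arctanTaylor, show 2 * (N + 1) = 2 * N + 2 by ring]
    push_cast at hrec ⊢
    linear_combination ih + (-1) ^ N * hrec

lemma abs_arctan_sub_arctanTaylor_le (N : ℕ) {t : ℝ} (h0 : 0 ≤ t) (h1 : t ≤ 1) :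
    |arctan t - arctanTaylor N t| ≤ 1 / (2 * N + 1) := by
  rw [arctan_eq_arctanTaylor_add N t, add_sub_cancel_left, abs_mul, abs_pow, abs_neg, abs_one,
    one_pow, one_mul, abs_of_nonneg (arctanMoment_nonneg _ h0)]
  calc arctanMoment (2 * N) t ≤ t ^ (2 * N + 1) / (2 * N + 1) := by
        exact_mod_cast arctanMoment_le (2 * N) h0
    _ ≤ 1 / (2 * N + 1) := by gcongr; exact pow_le_one₀ h0 h1

lemma integral_two_mul_arctan_div_one_add_sq :
    ∫ t in (0 : ℝ)..1, 2 * arctan t / (1 + t ^ 2) = π ^ 2 / 16 := by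
  have hderiv (t : ℝ) : HasDerivAt (fun t => arctan t ^ 2) (2 * arctan t / (1 + t ^ 2)) t := by
    refine ((hasDerivAt_arctan t).pow 2).congr_deriv ?_
    field_simp
    ring
  rw [integral_eq_sub_of_hasDerivAt (fun t _ => hderiv t)
    ((continuous_arctan.const_mul 2).div_one_add_sq.intervalIntegrable _ _), arctan_one,
    arctan_zero]
  ring

lemma sum_range_eq_integral_arctanTaylor (N : ℕ) :
    ∑ n ∈ range N, (log 2 - skewH n) / (2 * (n : ℝ) + 1) =
      ∫ t in (0 : ℝ)..1, 2 * arctanTaylor N t / (1 + t ^ 2) := by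
  have hintegrand (t : ℝ) : 2 * arctanTaylor N t / (1 + t ^ 2) =
      ∑ n ∈ range N, (-1) ^ n * 2 / (2 * n + 1) * (t ^ (2 * n + 1) / (1 + t ^ 2)) := by
    rw [arctanTaylor, mul_sum, sum_div]
    refine sum_congr rfl fun n _ => ?_
    ring
  simp_rw [hintegrand]
  rw [integral_finsetSum fun n _ =>
    ((continuous_pow_div_one_add_sq _).intervalIntegrable _ _).const_mul _]
  refine sum_congr rfl fun n _ => ?_
  rw [integral_const_mul, ← arctanMoment, log_two_sub_skewH]
  ring

lemma abs_sum_range_sub_pi_sq_div_sixteen_le (N : ℕ) :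
    |∑ n ∈ range N, (log 2 - skewH n) / (2 * (n : ℝ) + 1) - π ^ 2 / 16| ≤
      2 / (2 * (N : ℝ) + 1) := by
  have hbound : ∀ t ∈ Set.uIoc (0 : ℝ) 1,
      ‖2 * arctanTaylor N t / (1 + t ^ 2) - 2 * arctan t / (1 + t ^ 2)‖ ≤ 2 / (2 * N + 1) := by
    intro t ht
    rw [Set.uIoc_of_le zero_le_one] at ht
    have hpos : 0 < 1 + t ^ 2 := by positivity
    rw [Real.norm_eq_abs, ← sub_div, ← mul_sub, abs_div, abs_mul, abs_two, abs_sub_comm,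
      abs_of_pos hpos, div_le_iff₀ hpos]
    calc 2 * |arctan t - arctanTaylor N t| ≤ 2 * (1 / (2 * N + 1)) := by
          gcongr
          exact abs_arctan_sub_arctanTaylor_le N ht.1.le ht.2
      _ = 2 / (2 * N + 1) := by ring
      _ ≤ 2 / (2 * N + 1) * (1 + t ^ 2) := le_mul_of_one_le_right (by positivity) (by nlinarith)
  have hest := norm_integral_le_of_norm_le_const hbound
  rwa [integral_sub
    (((continuous_arctanTaylor N).const_mul 2).div_one_add_sq.intervalIntegrable _ _)
    ((continuous_arctan.const_mul 2).div_one_add_sq.intervalIntegrable _ _),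
    ← sum_range_eq_integral_arctanTaylor, integral_two_mul_arctan_div_one_add_sq, sub_zero,
    abs_one, mul_one] at hest

lemma abs_log_two_sub_skewH_le (n : ℕ) : |log 2 - skewH n| ≤ 1 / (n + 1) := by
  have hle := arctanMoment_le (2 * n + 1) zero_le_one
  rw [log_two_sub_skewH, abs_mul, abs_pow, abs_neg, abs_one, one_pow, one_mul,
    abs_of_nonneg (mul_nonneg zero_le_two (arctanMoment_nonneg _ zero_le_one))]
  push_cast at hle
  calc 2 * arctanMoment (2 * n + 1) 1 ≤ 2 * (1 / (2 * n + 1 + 1)) := by gcongr; simpa using hle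
    _ = 1 / (n + 1) := by field_simp; ring

lemma summable_log_two_sub_skewH_div :
    Summable fun n : ℕ => (log 2 - skewH n) / (2 * (n : ℝ) + 1) := by
  have hsq : Summable fun n : ℕ => 1 / ((n : ℝ) + 1) ^ 2 := by
    simpa using (summable_nat_add_iff 1).mpr (summable_one_div_nat_pow.mpr one_lt_two)
  refine hsq.of_norm_bounded fun n => ?_
  rw [Real.norm_eq_abs, abs_div, abs_of_pos (by positivity : (0 : ℝ) < 2 * n + 1), sq,
    ← div_div]
  gcongr
  · exact abs_log_two_sub_skewH_le n
  · linarith [(n.cast_nonneg : (0 : ℝ) ≤ n)]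

end SkewHarmonic

open SkewHarmonic in
theorem stmt4 :
    Real.pi ^ 2 / 16 = ∑' n : ℕ, (Real.log 2 - skewH n) / (2 * (n : ℝ) + 1) := by
  have herror : Tendsto (fun N : ℕ => 2 / (2 * (N : ℝ) + 1)) atTop (nhds 0) :=
    tendsto_const_nhds.div_atTop <| tendsto_atTop_add_const_right _ _ <|
      tendsto_natCast_atTop_atTop.const_mul_atTop two_pos
  have hpartial := squeeze_zero_norm
    (fun N => (Real.norm_eq_abs _).trans_le (abs_sum_range_sub_pi_sq_div_sixteen_le N)) herror
  refine (summable_log_two_sub_skewH_div.hasSum_iff_tendsto_nat.mpr ?_).tsum_eq.symm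
  exact tendsto_sub_nhds_zero_iff.mp hpartial
end

section
/- For every real α with 0 < α < 1, ∫₀^∞ log(1+αx)/(x(1+x)) dx = log α · log(1-α) + Li₂(α). -/
/-!
Write `log (1 + α x) / (x (1 + x)) = ∫₀^α dt / ((1 + t x) (1 + x))` and swap the two integrals
(Tonelli, everything is nonnegative). The inner integral over `x` is `-log t / (1 - t)`, i.e.
`∑ tⁿ (-log t)`, and `∫₀^α tⁿ (-log t) dt = α^(n+1) / (n+1)² - log α · α^(n+1) / (n+1)`.
Summing over `n` gives `Li₂ α + log α · log (1 - α)` via `∑ α^(n+1) / (n+1) = -log (1 - α)`.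
-/

open MeasureTheory Real

open Set Filter Topology

theorem hasSum_Li2 {x : ℝ} (hx : |x| ≤ 1) :
    HasSum (fun n : ℕ => x ^ (n + 1) / ((n : ℝ) + 1) ^ 2) (Li2 x) := by
  refine (Summable.of_norm_bounded (g := fun n : ℕ => 1 / ((n : ℝ) + 1) ^ 2) ?_ ?_).hasSum
  · exact ((summable_nat_add_iff 1).mpr (summable_one_div_nat_pow.mpr one_lt_two)).congr
      (by simp)
  · intro n
    rw [norm_div, norm_pow, norm_pow, Real.norm_eq_abs, Real.norm_of_nonneg (by positivity)]
    gcongr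
    exact pow_le_one₀ (abs_nonneg x) hx

theorem hasSum_log_mul_log_add_Li2 {x : ℝ} (hx : |x| < 1) :
    HasSum (fun n : ℕ => x ^ (n + 1) / ((n : ℝ) + 1) ^ 2 - log x * (x ^ (n + 1) / (n + 1)))
      (log x * log (1 - x) + Li2 x) := by
  rw [show log x * log (1 - x) + Li2 x = Li2 x - log x * -log (1 - x) by ring]
  exact (hasSum_Li2 hx.le).sub ((hasSum_pow_div_log_of_abs_lt_one hx).mul_left (log x))

theorem hasDerivAt_pow_succ_mul_log_div_sub (n : ℕ) {t : ℝ} (ht : t ≠ 0) :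
    HasDerivAt (fun t => t ^ (n + 1) * log t / (n + 1) - t ^ (n + 1) / (n + 1) ^ 2)
      (t ^ n * log t) t := by
  have hpow : HasDerivAt (fun t => t ^ (n + 1)) ((n + 1) * t ^ n) t := by
    simpa using hasDerivAt_pow (n + 1) t
  refine (((hpow.mul (hasDerivAt_log ht)).div_const _).sub (hpow.div_const _)).congr_deriv ?_
  field_simp
  ring

theorem integral_pow_mul_log {a : ℝ} (ha : 0 ≤ a) (n : ℕ) :
    ∫ t in 0..a, t ^ n * log t = a ^ (n + 1) * log a / (n + 1) - a ^ (n + 1) / (n + 1) ^ 2 := by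
  have hcont : Continuous fun t : ℝ => t ^ (n + 1) * log t :=
    ((continuous_pow n).mul continuous_mul_log).congr fun t => by simp only [Pi.mul_apply]; ring
  rw [intervalIntegral.integral_eq_sub_of_hasDerivAt_of_le ha (by fun_prop)
    (fun t ht => hasDerivAt_pow_succ_mul_log_div_sub n ht.1.ne')
    (intervalIntegral.intervalIntegrable_log'.continuousOn_mul (by fun_prop))]
  simp

theorem lintegral_pow_mul_neg_log {a : ℝ} (ha₀ : 0 ≤ a) (ha₁ : a ≤ 1) (n : ℕ) :
    ∫⁻ t in Ioc 0 a, ENNReal.ofReal (t ^ n * -log t) =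
      ENNReal.ofReal (a ^ (n + 1) / (n + 1) ^ 2 - log a * (a ^ (n + 1) / (n + 1))) := by
  have hint : IntegrableOn (fun t => t ^ n * -log t) (Ioc 0 a) :=
    (intervalIntegral.intervalIntegrable_log'.neg.continuousOn_mul (by fun_prop)).1
  have hnonneg : 0 ≤ᵐ[volume.restrict (Ioc 0 a)] fun t => t ^ n * -log t :=
    ae_restrict_of_forall_mem measurableSet_Ioc fun t ht =>
      mul_nonneg (pow_nonneg ht.1.le n) (neg_nonneg.2 (log_nonpos ht.1.le (ht.2.trans ha₁)))
  rw [← ofReal_integral_eq_lintegral_ofReal hint hnonneg]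
  simp only [mul_neg]
  rw [integral_neg, ← intervalIntegral.integral_of_le ha₀, integral_pow_mul_log ha₀]
  ring_nf

section Kernel

variable {t x : ℝ}

theorem one_add_mul_mul_one_add_inv_pos (ht : 0 ≤ t) (hx : 0 ≤ x) :
    0 < ((1 + t * x) * (1 + x))⁻¹ := by
  have : 0 ≤ t * x := mul_nonneg ht hx
  have : 0 < 1 + t * x := by linarith
  have : 0 < 1 + x := by linarith
  positivity

theorem lintegral_Ioc_inv_mul {a : ℝ} (ha : 0 ≤ a) (hx : 0 < x) :
    ∫⁻ t in Ioc 0 a, ENNReal.ofReal ((1 + t * x) * (1 + x))⁻¹ =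
      ENNReal.ofReal (log (1 + a * x) / (x * (1 + x))) := by
  have hderiv : ∀ t ∈ uIcc 0 a, HasDerivAt (fun t => log (1 + t * x) / (x * (1 + x)))
      ((1 + t * x) * (1 + x))⁻¹ t := by
    intro t ht
    rw [uIcc_of_le ha] at ht
    have hpos : 0 < 1 + t * x := by nlinarith [ht.1]
    have hlin : HasDerivAt (fun t => 1 + t * x) x t := by
      simpa using ((hasDerivAt_id t).mul_const x).const_add 1
    refine ((hlin.log hpos.ne').div_const _).congr_deriv ?_
    have : 0 < 1 + x := by linarith
    field_simp
  have hint : IntervalIntegrable (fun t => ((1 + t * x) * (1 + x))⁻¹) volume 0 a := by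
    refine (ContinuousOn.inv₀ (by fun_prop) fun t ht => ?_).intervalIntegrable
    rw [uIcc_of_le ha] at ht
    exact (inv_pos.1 (one_add_mul_mul_one_add_inv_pos ht.1 hx.le)).ne'
  rw [← ofReal_integral_eq_lintegral_ofReal hint.1 (ae_restrict_of_forall_mem measurableSet_Ioc
    fun t ht => (one_add_mul_mul_one_add_inv_pos ht.1.le hx.le).le),
    ← intervalIntegral.integral_of_le ha, intervalIntegral.integral_eq_sub_of_hasDerivAt hderiv hint]
  simp

theorem hasDerivAt_log_one_add_sub_log_one_add_mul_div (ht₀ : 0 ≤ t) (ht₁ : t ≠ 1)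
    (hx : 0 ≤ x) :
    HasDerivAt (fun x => (log (1 + x) - log (1 + t * x)) / (1 - t))
      ((1 + t * x) * (1 + x))⁻¹ x := by
  have h1 : 0 < 1 + x := by linarith
  have h2 : 0 < 1 + t * x := by nlinarith
  have d1 : HasDerivAt (fun x => 1 + x) 1 x := (hasDerivAt_id x).const_add 1
  have d2 : HasDerivAt (fun x => 1 + t * x) t x := by
    simpa using ((hasDerivAt_id x).const_mul t).const_add 1
  refine (((d1.log h1.ne').sub (d2.log h2.ne')).div_const _).congr_deriv ?_
  have : 1 - t ≠ 0 := sub_ne_zero.2 ht₁.symm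
  field_simp
  ring

theorem tendsto_log_one_add_sub_log_one_add_mul (ht : 0 < t) :
    Tendsto (fun x => log (1 + x) - log (1 + t * x)) atTop (𝓝 (-log t)) := by
  have hcont : ContinuousAt (fun y => log (y + 1) - log (y + t)) 0 :=
    ((continuousAt_id.add continuousAt_const).log (by simp)).sub
      ((continuousAt_id.add continuousAt_const).log (by simpa using ht.ne'))
  have := hcont.tendsto.comp tendsto_inv_atTop_zero
  simp only [zero_add, log_one, zero_sub] at this
  refine this.congr' ?_
  filter_upwards [eventually_gt_atTop 0] with x hx
  have e1 : 1 + x = x * (x⁻¹ + 1) := by field_simp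
  have e2 : 1 + t * x = x * (x⁻¹ + t) := by field_simp
  simp only [Function.comp_apply]
  rw [e1, e2, log_mul hx.ne' (by positivity), log_mul hx.ne' (by positivity)]
  ring

theorem lintegral_Ioi_inv_mul (ht₀ : 0 < t) (ht₁ : t ≠ 1) :
    ∫⁻ x in Ioi 0, ENNReal.ofReal ((1 + t * x) * (1 + x))⁻¹ =
      ENNReal.ofReal (-log t / (1 - t)) := by
  have hderiv := fun x (hx : x ∈ Ici (0 : ℝ)) =>
    hasDerivAt_log_one_add_sub_log_one_add_mul_div ht₀.le ht₁ hx
  have hnonneg : ∀ x ∈ Ioi (0 : ℝ), 0 ≤ ((1 + t * x) * (1 + x))⁻¹ := fun x hx =>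
    (one_add_mul_mul_one_add_inv_pos ht₀.le (le_of_lt hx)).le
  have hlim := (tendsto_log_one_add_sub_log_one_add_mul ht₀).div_const (1 - t)
  rw [← ofReal_integral_eq_lintegral_ofReal
    (integrableOn_Ioi_deriv_of_nonneg' hderiv hnonneg hlim)
    (ae_restrict_of_forall_mem measurableSet_Ioi hnonneg),
    integral_Ioi_of_hasDerivAt_of_nonneg' hderiv hnonneg hlim]
  simp

theorem ofReal_neg_log_div_one_sub (ht₀ : 0 ≤ t) (ht₁ : t < 1) :
    ENNReal.ofReal (-log t / (1 - t)) = ∑' n : ℕ, ENNReal.ofReal (t ^ n * -log t) := by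
  have hlog : 0 ≤ -log t := neg_nonneg.2 (log_nonpos ht₀ ht₁.le)
  rw [← ENNReal.ofReal_tsum_of_nonneg (fun n => mul_nonneg (pow_nonneg ht₀ n) hlog)
    ((summable_geometric_of_lt_one ht₀ ht₁).mul_right _), tsum_mul_right,
    tsum_geometric_of_lt_one ht₀ ht₁, div_eq_inv_mul]

end Kernel

theorem lintegral_log_one_add_mul_div {α : ℝ} (h0 : 0 < α) (h1 : α < 1) :
    ∫⁻ x in Ioi 0, ENNReal.ofReal (log (1 + α * x) / (x * (1 + x))) =
      ENNReal.ofReal (log α * log (1 - α) + Li2 α) := by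
  have hS := hasSum_log_mul_log_add_Li2 (abs_lt.2 ⟨by linarith, h1⟩)
  have hterm_nonneg (n : ℕ) :
      0 ≤ α ^ (n + 1) / ((n : ℝ) + 1) ^ 2 - log α * (α ^ (n + 1) / (n + 1)) :=
    sub_nonneg.2 ((mul_nonpos_of_nonpos_of_nonneg (log_nonpos h0.le h1.le)
      (by positivity)).trans (by positivity))
  calc ∫⁻ x in Ioi 0, ENNReal.ofReal (log (1 + α * x) / (x * (1 + x)))
      = ∫⁻ x in Ioi 0, ∫⁻ t in Ioc 0 α, ENNReal.ofReal ((1 + t * x) * (1 + x))⁻¹ :=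
        setLIntegral_congr_fun measurableSet_Ioi fun x hx => (lintegral_Ioc_inv_mul h0.le hx).symm
    _ = ∫⁻ t in Ioc 0 α, ∫⁻ x in Ioi 0, ENNReal.ofReal ((1 + t * x) * (1 + x))⁻¹ :=
        lintegral_lintegral_swap (by fun_prop)
    _ = ∫⁻ t in Ioc 0 α, ∑' n : ℕ, ENNReal.ofReal (t ^ n * -log t) :=
        setLIntegral_congr_fun measurableSet_Ioc fun t ht => by
          rw [lintegral_Ioi_inv_mul ht.1 (ht.2.trans_lt h1).ne,
            ofReal_neg_log_div_one_sub ht.1.le (ht.2.trans_lt h1)]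
    _ = ∑' n : ℕ, ∫⁻ t in Ioc 0 α, ENNReal.ofReal (t ^ n * -log t) :=
        lintegral_tsum fun n => by fun_prop
    _ = ∑' n : ℕ, ENNReal.ofReal
          (α ^ (n + 1) / ((n : ℝ) + 1) ^ 2 - log α * (α ^ (n + 1) / (n + 1))) := by
        simp_rw [lintegral_pow_mul_neg_log h0.le h1.le]
    _ = ENNReal.ofReal (log α * log (1 - α) + Li2 α) := by
        rw [← ENNReal.ofReal_tsum_of_nonneg hterm_nonneg hS.summable, hS.tsum_eq]

theorem stmt8 (α : ℝ) (h0 : 0 < α) (h1 : α < 1) :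
    ∫ x in Set.Ioi (0 : ℝ), Real.log (1 + α * x) / (x * (1 + x)) =
      Real.log α * Real.log (1 - α) + Li2 α := by
  have hnonneg : 0 ≤ᵐ[volume.restrict (Ioi 0)] fun x => log (1 + α * x) / (x * (1 + x)) :=
    ae_restrict_of_forall_mem measurableSet_Ioi fun x (hx : 0 < x) =>
      div_nonneg (log_nonneg (by nlinarith)) (by positivity)
  have hrhs : 0 ≤ log α * log (1 - α) + Li2 α :=
    add_nonneg (mul_nonneg_of_nonpos_of_nonpos (log_nonpos h0.le h1.le)
      (log_nonpos (by linarith) (by linarith)))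
      ((hasSum_Li2 (abs_le.2 ⟨by linarith, h1.le⟩)).nonneg fun n => by positivity)
  rw [integral_eq_lintegral_of_nonneg_ae hnonneg (by fun_prop : Measurable _).aestronglyMeasurable,
    lintegral_log_one_add_mul_div h0 h1, ENNReal.toReal_ofReal hrhs]
end

section
/- For every real α with -1 < α ≤ 1, ∫₀¹ log(1+αx)/(x(1+x)) dx = Li₂(1/2) - Li₂((1-α)/2). -/
/-
Since log (1 + α x) / (x (1 + x)) = ∫₀^α dt / ((1 + x)(1 + t x)), swapping the two integrals
reduces the claim to ∫₀^α (log 2 - log (1 + t)) / (1 - t) dt, the inner integral being computed by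
partial fractions. The new integrand is the derivative of t ↦ -Li₂((1 - t) / 2), because
Li₂'(y) = ∑ yⁿ / (n + 1) = -log (1 - y) / y.
-/

open MeasureTheory Real

open Set intervalIntegral

lemma one_add_mul_pos_of_mem_uIcc {c b x : ℝ} (h : 0 < 1 + c * b) (hx : x ∈ uIcc 0 b) :
    0 < 1 + c * x := by
  rcases mem_uIcc.mp hx with ⟨hx0, hxb⟩ | ⟨hbx, hx0⟩ <;> rcases le_total 0 c with hc | hc <;>
    nlinarith

lemma intervalIntegrable_div_one_add_mul {c b : ℝ} (h : 0 < 1 + c * b) :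
    IntervalIntegrable (fun x => c / (1 + c * x)) volume 0 b :=
  ContinuousOn.intervalIntegrable <| continuousOn_const.div (by fun_prop) fun x hx =>
    (one_add_mul_pos_of_mem_uIcc h hx).ne'

lemma integral_div_one_add_mul {c b : ℝ} (h : 0 < 1 + c * b) :
    ∫ x in (0 : ℝ)..b, c / (1 + c * x) = log (1 + c * b) := by
  have hderiv : ∀ x ∈ uIcc 0 b, HasDerivAt (fun x => log (1 + c * x)) (c / (1 + c * x)) x :=
    fun x hx => by
      simpa using (((hasDerivAt_id x).const_mul c).const_add 1).log
        (one_add_mul_pos_of_mem_uIcc h hx).ne'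
  rw [integral_eq_sub_of_hasDerivAt hderiv (intervalIntegrable_div_one_add_mul h)]
  simp

lemma log_one_add_mul_div_eq_integral {α x : ℝ} (hx : 0 < x) (h : 0 < 1 + α * x) :
    log (1 + α * x) / (x * (1 + x)) = ∫ t in (0 : ℝ)..α, 1 / ((1 + x) * (1 + t * x)) := by
  have hfrac : ∀ t, 1 / ((1 + x) * (1 + t * x)) = (x * (1 + x))⁻¹ * (x / (1 + x * t)) := by
    intro t
    rw [mul_comm x t]
    field_simp
  simp_rw [hfrac, intervalIntegral.integral_const_mul,
    integral_div_one_add_mul (show 0 < 1 + x * α by linarith [mul_comm α x]), mul_comm x α]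
  ring

lemma intervalIntegral_intervalIntegral_swap_of_continuousOn {E : Type*}
    [NormedAddCommGroup E] [NormedSpace ℝ E] {F : ℝ → ℝ → E} {a b c d : ℝ}
    (hF : ContinuousOn F.uncurry (uIcc a b ×ˢ uIcc c d)) :
    ∫ x in a..b, ∫ y in c..d, F x y = ∫ y in c..d, ∫ x in a..b, F x y :=
  intervalIntegral_intervalIntegral_swap <|
    (hF.integrableOn_compact (isCompact_uIcc.prod isCompact_uIcc)).mono_set
      (prod_mono uIoc_subset_uIcc uIoc_subset_uIcc)

lemma continuousOn_one_div_mul_one_add_mul {α : ℝ} (h0 : -1 < α) :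
    ContinuousOn (fun x t : ℝ => 1 / ((1 + x) * (1 + t * x))).uncurry (uIcc 0 1 ×ˢ uIcc 0 α) := by
  refine continuousOn_const.div (by fun_prop) fun ⟨x, t⟩ ⟨hx, ht⟩ => ?_
  rw [uIcc_of_le zero_le_one] at hx
  have hxα : 0 < 1 + x * α := by rcases le_total 0 α with h | h <;> nlinarith [hx.1, hx.2]
  have htx := one_add_mul_pos_of_mem_uIcc hxα ht
  dsimp only [Function.uncurry]
  nlinarith [hx.1]

lemma integral_one_div_mul_one_add_mul {t : ℝ} (ht : -1 < t) (ht1 : t ≠ 1) :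
    ∫ x in (0 : ℝ)..1, 1 / ((1 + x) * (1 + t * x)) = (log 2 - log (1 + t)) / (1 - t) := by
  have h1 : (0 : ℝ) < 1 + 1 * 1 := by norm_num
  have ht' : 0 < 1 + t * 1 := by linarith
  have hfrac : ∀ x ∈ uIcc (0 : ℝ) 1,
      1 / ((1 + x) * (1 + t * x)) = (1 - t)⁻¹ * (1 / (1 + 1 * x) - t / (1 + t * x)) := by
    intro x hx
    have htx := (one_add_mul_pos_of_mem_uIcc ht' hx).ne'
    have h1x : 1 + x ≠ 0 := by simpa using (one_add_mul_pos_of_mem_uIcc h1 hx).ne'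
    have h1t : 1 - t ≠ 0 := sub_ne_zero.mpr ht1.symm
    rw [one_mul, div_sub_div _ _ h1x htx]
    field_simp
    ring
  rw [integral_congr hfrac, intervalIntegral.integral_const_mul,
    integral_sub (intervalIntegrable_div_one_add_mul h1) (intervalIntegrable_div_one_add_mul ht'),
    integral_div_one_add_mul h1, integral_div_one_add_mul ht']
  norm_num
  ring

lemma hasDerivAt_Li2_tsum {y : ℝ} (hy : |y| < 1) :
    HasDerivAt Li2 (∑' n : ℕ, y ^ n / ((n : ℝ) + 1)) y := by
  obtain ⟨r, hyr, hr1⟩ := exists_between hy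
  refine hasDerivAt_tsum_of_isPreconnected (u := fun n : ℕ => r ^ n)
    (g := fun (n : ℕ) (z : ℝ) => z ^ (n + 1) / ((n : ℝ) + 1) ^ 2)
    (g' := fun (n : ℕ) (z : ℝ) => z ^ n / ((n : ℝ) + 1))
    (summable_geometric_of_lt_one ((abs_nonneg y).trans hyr.le) hr1) isOpen_Ioo
    (convex_Ioo (-r) r).isPreconnected (fun n z _ => ?_) (fun n z hz => ?_)
    (y₀ := 0) ⟨by linarith [abs_nonneg y], by linarith [abs_nonneg y]⟩
    (by simp) (abs_lt.mp hyr)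
  · refine ((hasDerivAt_pow (n + 1) z).div_const _).congr_deriv ?_
    rw [Nat.add_sub_cancel]
    push_cast
    field_simp
  · have hz : |z| ≤ r := abs_le.mpr ⟨hz.1.le, hz.2.le⟩
    rw [norm_div, norm_pow, Real.norm_eq_abs, Real.norm_of_nonneg (by positivity)]
    calc |z| ^ n / ((n : ℝ) + 1) ≤ |z| ^ n := div_le_self (by positivity) (by simp)
      _ ≤ r ^ n := pow_le_pow_left₀ (abs_nonneg z) hz n

lemma tsum_pow_div_succ {y : ℝ} (hy : |y| < 1) (hy0 : y ≠ 0) :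
    ∑' n : ℕ, y ^ n / ((n : ℝ) + 1) = -log (1 - y) / y := by
  refine (((hasSum_pow_div_log_of_abs_lt_one hy).div_const y).congr_fun fun n => ?_).tsum_eq
  rw [pow_succ]
  field_simp

lemma hasDerivAt_Li2 {y : ℝ} (hy : |y| < 1) (hy0 : y ≠ 0) :
    HasDerivAt Li2 (-log (1 - y) / y) y :=
  tsum_pow_div_succ hy hy0 ▸ hasDerivAt_Li2_tsum hy

lemma continuousAt_Li2 {y : ℝ} (hy : |y| < 1) : ContinuousAt Li2 y :=
  (hasDerivAt_Li2_tsum hy).continuousAt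

lemma hasDerivAt_neg_Li2_one_sub_div_two {t : ℝ} (ht : -1 < t) (ht1 : t < 1) :
    HasDerivAt (fun s => -Li2 ((1 - s) / 2)) ((log 2 - log (1 + t)) / (1 - t)) t := by
  have hy : |(1 - t) / 2| < 1 := abs_lt.mpr ⟨by linarith, by linarith⟩
  have hinner : HasDerivAt (fun s : ℝ => (1 - s) / 2) (-1 / 2) t :=
    ((hasDerivAt_id t).const_sub 1).div_const 2
  refine ((hasDerivAt_Li2 hy (by linarith)).comp t hinner).neg.congr_deriv ?_
  have h : 1 - (1 - t) / 2 = (1 + t) / 2 := by ring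
  rw [h, log_div (by linarith) two_ne_zero]
  field_simp
  ring

lemma log_two_sub_log_div_nonneg {t : ℝ} (ht : -1 < t) (ht1 : t < 1) :
    0 ≤ (log 2 - log (1 + t)) / (1 - t) :=
  div_nonneg (sub_nonneg.mpr (log_le_log (by linarith) (by linarith))) (by linarith)

lemma integral_log_two_sub_log_div {α : ℝ} (h0 : -1 < α) (h1 : α ≤ 1) :
    ∫ t in (0 : ℝ)..α, (log 2 - log (1 + t)) / (1 - t) = Li2 (1 / 2) - Li2 ((1 - α) / 2) := by
  have hcont : ContinuousOn (fun s => -Li2 ((1 - s) / 2)) (uIcc 0 α) := by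
    intro s hs
    have hs' : -1 < s ∧ s ≤ 1 := by
      rcases mem_uIcc.mp hs with h | h <;> constructor <;> linarith [h.1, h.2]
    refine ((continuousAt_Li2 ?_).comp (by fun_prop)).neg.continuousWithinAt
    exact abs_lt.mpr ⟨by linarith, by linarith⟩
  have hIoo : ∀ s ∈ Ioo (min 0 α) (max 0 α), -1 < s ∧ s < 1 := fun s hs =>
    ⟨lt_of_le_of_lt (le_min (by norm_num) h0.le) hs.1, hs.2.trans_le (max_le zero_le_one h1)⟩
  have hderiv := fun s hs => hasDerivAt_neg_Li2_one_sub_div_two (hIoo s hs).1 (hIoo s hs).2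
  rw [integral_eq_sub_of_hasDeriv_right hcont (fun s hs => (hderiv s hs).hasDerivWithinAt)
    (intervalIntegrable_deriv_of_nonneg hcont hderiv
      fun s hs => log_two_sub_log_div_nonneg (hIoo s hs).1 (hIoo s hs).2)]
  norm_num
  ring

theorem stmt10 (α : ℝ) (h0 : -1 < α) (h1 : α ≤ 1) :
    ∫ x in (0:ℝ)..1, Real.log (1 + α * x) / (x * (1 + x)) =
      Li2 (1 / 2) - Li2 ((1 - α) / 2) := by
  -- At t = 1 the closed form is the junk value 0 / 0 = 0, while the inner integral is 1 / 2.
  have hne_one : ∀ᵐ t : ℝ, t ≠ 1 := compl_mem_ae_iff.mpr (measure_singleton 1)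
  calc ∫ x in (0:ℝ)..1, log (1 + α * x) / (x * (1 + x))
      = ∫ x in (0:ℝ)..1, ∫ t in (0:ℝ)..α, 1 / ((1 + x) * (1 + t * x)) := by
        refine integral_congr_ae (ae_of_all _ fun x hx => ?_)
        rw [uIoc_of_le zero_le_one] at hx
        exact log_one_add_mul_div_eq_integral hx.1 (by nlinarith [hx.1, hx.2])
    _ = ∫ t in (0:ℝ)..α, ∫ x in (0:ℝ)..1, 1 / ((1 + x) * (1 + t * x)) :=
        intervalIntegral_intervalIntegral_swap_of_continuousOn
          (continuousOn_one_div_mul_one_add_mul h0)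
    _ = ∫ t in (0:ℝ)..α, (log 2 - log (1 + t)) / (1 - t) := by
        refine integral_congr_ae (hne_one.mono fun t ht1 ht => ?_)
        exact integral_one_div_mul_one_add_mul
          (lt_of_le_of_lt (le_min (by norm_num) h0.le) ht.1) ht1
    _ = Li2 (1 / 2) - Li2 ((1 - α) / 2) := integral_log_two_sub_log_div h0 h1
end

section
/- For every real α with -1 < α ≤ 1, Li₂(1/2) - Li₂((1-α)/2) = ∑_{n=0}^∞ (log 2 - Hₙ⁻) α^{n+1}/(n+1), where Hₙ⁻ = ∑_{k=1}^n (-1)^{k-1}/k. -/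
open Real

/-!
Expanding `(1 - α) ^ (n + 1)` by the binomial theorem writes `Li₂(1/2) - Li₂((1-α)/2)` as the
double series `∑ₙ ∑ₖ C(n+1,k+1) 2^(-(n+1)) (n+1)^(-2) (-1)^k α^(k+1)`. For `|α| ≤ 1` it converges
absolutely, since the `n`-th row of absolute values sums to at most `(n+1)^(-2)`. Summing the
columns first, the coefficient of `α^(k+1)` is `u k / (k+1)`, where
`u k = ∑ₙ C(n,k) 2^(-(n+1)) / (n+1)`. Pascal's rule gives `u k + u (k+1) = 1/(k+1)`, and
`u 0 = log 2`, whence `u k = (-1)^k (log 2 - Hₖ⁻)`.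
-/

open Finset

lemma summable_one_div_succ_sq : Summable (fun n : ℕ => 1 / ((n : ℝ) + 1) ^ 2) := by
  simpa using (summable_nat_add_iff 1).mpr (summable_one_div_nat_pow.mpr one_lt_two)

lemma summable_pow_div_succ_sq {x : ℝ} (hx : |x| ≤ 1) :
    Summable (fun n : ℕ => x ^ (n + 1) / ((n : ℝ) + 1) ^ 2) := by
  refine summable_one_div_succ_sq.of_norm_bounded fun n => ?_
  rw [norm_div, norm_pow, norm_pow, Real.norm_eq_abs, Real.norm_of_nonneg (by positivity)]
  gcongr
  exact pow_le_one₀ (abs_nonneg x) hx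

lemma cast_choose_succ_succ_div (n k : ℕ) :
    ((n + 1).choose (k + 1) : ℝ) / ((n : ℝ) + 1) = (n.choose k : ℝ) / ((k : ℝ) + 1) := by
  rw [div_eq_div_iff (by positivity) (by positivity)]
  exact_mod_cast (Nat.add_one_mul_choose_eq n k).symm.trans (mul_comm _ _)

lemma hasSum_choose_mul_half_pow (k : ℕ) :
    HasSum (fun n : ℕ => (n.choose k : ℝ) * (1 / 2) ^ (n + 1)) 1 := by
  have h := (hasSum_choose_mul_geometric_of_norm_lt_one k (r := (1 / 2 : ℝ))
    (by norm_num)).mul_left ((1 / 2 : ℝ) ^ (k + 1))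
  rw [show (1 / 2 : ℝ) ^ (k + 1) * (1 / (1 - 1 / 2) ^ (k + 1)) = 1 by norm_num] at h
  refine (hasSum_nat_add_iff' k).mp ?_
  rw [sum_eq_zero fun i hi => by rw [Nat.choose_eq_zero_of_lt (mem_range.mp hi)]; simp, sub_zero]
  exact h.congr_fun fun n => by ring

lemma hasSum_choose_mul_half_pow_div_succ (k : ℕ) :
    HasSum (fun n : ℕ => (n.choose k : ℝ) * (1 / 2) ^ (n + 1) / ((n : ℝ) + 1))
      ((-1) ^ k * (log 2 - skewH k)) := by
  induction k with
  | zero =>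
    have h := Real.hasSum_pow_div_log_of_abs_lt_one (x := (1 / 2 : ℝ)) (by norm_num [abs_of_pos])
    rw [show (1 : ℝ) - 1 / 2 = 2⁻¹ by norm_num, Real.log_inv, neg_neg] at h
    simpa [skewH] using h
  | succ k ih =>
    have pascal : HasSum (fun n : ℕ => (n.choose k : ℝ) * (1 / 2) ^ (n + 1) / ((n : ℝ) + 1) +
        (n.choose (k + 1) : ℝ) * (1 / 2) ^ (n + 1) / ((n : ℝ) + 1)) (1 / ((k : ℝ) + 1)) := by
      refine ((hasSum_choose_mul_half_pow k).div_const ((k : ℝ) + 1)).congr_fun fun n => ?_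
      rw [← add_div, ← add_mul, ← Nat.cast_add, ← Nat.choose_succ_succ', mul_div_right_comm,
        cast_choose_succ_succ_div]
      ring
    have hskewH : skewH (k + 1) = skewH k + (-1) ^ k / ((k : ℝ) + 1) := sum_range_succ _ _
    have hsign : ((-1 : ℝ)) ^ k * (-1) ^ k = 1 := by simp [← mul_pow]
    have hvalue : (-1) ^ (k + 1) * (log 2 - skewH (k + 1)) =
        1 / ((k : ℝ) + 1) - (-1) ^ k * (log 2 - skewH k) := by
      rw [hskewH, pow_succ]
      linear_combination (1 / ((k : ℝ) + 1)) * hsign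
    rw [hvalue]
    exact (pascal.sub ih).congr_fun fun n => by ring

noncomputable def dilogCoeff (n k : ℕ) : ℝ :=
  ((n + 1).choose (k + 1) : ℝ) * (1 / 2) ^ (n + 1) / ((n : ℝ) + 1) ^ 2

lemma dilogCoeff_nonneg (n k : ℕ) : 0 ≤ dilogCoeff n k := by
  unfold dilogCoeff; positivity

lemma hasSum_dilogCoeff_mul_pow (n : ℕ) (x : ℝ) :
    HasSum (fun k => dilogCoeff n k * x ^ (k + 1))
      ((((1 + x) / 2) ^ (n + 1) - (1 / 2) ^ (n + 1)) / ((n : ℝ) + 1) ^ 2) := by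
  have hvanish : ∀ k ∉ range (n + 1), dilogCoeff n k * x ^ (k + 1) = 0 := fun k hk => by
    rw [dilogCoeff, Nat.choose_eq_zero_of_lt (by simpa using hk)]; simp
  have binomial : (1 + x) ^ (n + 1) - 1 =
      ∑ k ∈ range (n + 1), ((n + 1).choose (k + 1) : ℝ) * x ^ (k + 1) := by
    rw [add_comm, add_pow, sum_range_succ']
    simp [mul_comm]
  have hvalue : (((1 + x) / 2) ^ (n + 1) - (1 / 2) ^ (n + 1)) / ((n : ℝ) + 1) ^ 2 =
      ∑ k ∈ range (n + 1), dilogCoeff n k * x ^ (k + 1) := by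
    simp_rw [dilogCoeff, div_mul_eq_mul_div, mul_right_comm _ ((1 / 2 : ℝ) ^ (n + 1)), ← sum_div,
      ← sum_mul, ← binomial, div_eq_mul_one_div (1 + x), mul_pow]
    ring
  exact hvalue ▸ hasSum_sum_of_ne_finset_zero hvanish

lemma hasSum_dilogCoeff (k : ℕ) :
    HasSum (fun n => dilogCoeff n k) ((-1) ^ k * (log 2 - skewH k) / ((k : ℝ) + 1)) := by
  refine ((hasSum_choose_mul_half_pow_div_succ k).div_const ((k : ℝ) + 1)).congr_fun fun n => ?_
  rw [dilogCoeff, sq, ← div_div, mul_div_right_comm, cast_choose_succ_succ_div]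
  ring

lemma summable_dilogCoeff : Summable (fun p : ℕ × ℕ => dilogCoeff p.1 p.2) := by
  have hrow (n : ℕ) :
      HasSum (fun k => dilogCoeff n k) ((1 - (1 / 2) ^ (n + 1)) / ((n : ℝ) + 1) ^ 2) := by
    simpa using hasSum_dilogCoeff_mul_pow n 1
  refine (summable_prod_of_nonneg fun p => dilogCoeff_nonneg p.1 p.2).mpr
    ⟨fun n => (hrow n).summable, ?_⟩
  refine summable_one_div_succ_sq.of_nonneg_of_le
    (fun n => tsum_nonneg fun k => dilogCoeff_nonneg n k) fun n => ?_
  rw [(hrow n).tsum_eq]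
  gcongr
  exact sub_le_self 1 (by positivity)

theorem Li2_half_sub_Li2_eq_tsum {α : ℝ} (hα : |α| ≤ 1) :
    Li2 (1 / 2) - Li2 ((1 - α) / 2) =
      ∑' n : ℕ, (Real.log 2 - skewH n) * α ^ (n + 1) / ((n : ℝ) + 1) := by
  have hsummable : Summable (Function.uncurry fun n k => dilogCoeff n k * (-α) ^ (k + 1)) := by
    refine summable_dilogCoeff.of_norm_bounded fun p => ?_
    rw [Function.uncurry, norm_mul, Real.norm_of_nonneg (dilogCoeff_nonneg _ _), norm_pow,
      norm_neg, Real.norm_eq_abs]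
    exact mul_le_of_le_one_right (dilogCoeff_nonneg _ _) (pow_le_one₀ (abs_nonneg α) hα)
  have hα' : |(1 - α) / 2| ≤ 1 := by
    rw [abs_le] at hα ⊢
    constructor <;> linarith
  have hsign (k : ℕ) : ((-1 : ℝ)) ^ k * (-1) ^ k = 1 := by simp [← mul_pow]
  calc Li2 (1 / 2) - Li2 ((1 - α) / 2)
      = -∑' n, ∑' k, dilogCoeff n k * (-α) ^ (k + 1) := by
        rw [Li2, Li2, ← (summable_pow_div_succ_sq (by norm_num [abs_of_pos])).tsum_sub
          (summable_pow_div_succ_sq hα'), ← tsum_neg]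
        refine tsum_congr fun n => ?_
        rw [(hasSum_dilogCoeff_mul_pow n (-α)).tsum_eq, ← sub_eq_add_neg]
        ring
    _ = -∑' k, ∑' n, dilogCoeff n k * (-α) ^ (k + 1) := by rw [hsummable.tsum_comm]
    _ = ∑' k : ℕ, (Real.log 2 - skewH k) * α ^ (k + 1) / ((k : ℝ) + 1) := by
        rw [← tsum_neg]
        refine tsum_congr fun k => ?_
        rw [((hasSum_dilogCoeff k).mul_right _).tsum_eq, neg_pow, pow_succ]
        linear_combination ((Real.log 2 - skewH k) * α ^ (k + 1) / ((k : ℝ) + 1)) * hsign k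

theorem stmt12 (α : ℝ) (h0 : -1 < α) (h1 : α ≤ 1) :
    Li2 (1 / 2) - Li2 ((1 - α) / 2) =
      ∑' n : ℕ, (Real.log 2 - skewH n) * α ^ (n + 1) / ((n : ℝ) + 1) :=
  Li2_half_sub_Li2_eq_tsum (abs_le.mpr ⟨h0.le, h1⟩)
end

section
/- ∑_{n=0}^∞ (log 2 - Hₙ⁻)/(n+1) = π²/12 - (log 2)²/2, where Hₙ⁻ = ∑_{k=1}^n (-1)^{k-1}/k. -/
/-!
Since `∫₀¹ 1/(1+t) = log 2` and `∫₀¹ tⁿ/(1+t) + ∫₀¹ tⁿ⁺¹/(1+t) = 1/(n+1)`, induction gives `log 2 - Hₙ⁻ = (-1)ⁿ ∫₀¹ tⁿ/(1+t) dt`. Summing `∑ (-1)ⁿ tⁿ/(n+1) = log(1+t)/t`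
under the integral (the `n`-th term is bounded by `tⁿ/(n+1)`, whose integral `1/(n+1)²` is
summable) turns the series into `∫₀¹ log(1+t)/(t(1+t)) dt`. Splitting `1/(t(1+t)) = 1/t - 1/(1+t)`,
the same interchange gives `∫₀¹ log(1+t)/t = ∑ (-1)ⁿ/(n+1)² = π²/12`, while
`∫₀¹ log(1+t)/(1+t) = (log 2)²/2` is elementary.
-/

open Real

open MeasureTheory Set intervalIntegral

theorem hasSum_neg_one_pow_mul_of_hasSum_even {f : ℕ → ℝ} {a b : ℝ} (hf : HasSum f a)
    (heven : HasSum (fun k ↦ f (2 * k)) b) :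
    HasSum (fun n ↦ (-1) ^ n * f n) (2 * b - a) := by
  have hodd : HasSum (fun k ↦ f (2 * k + 1)) (a - b) := by
    have hs : Summable fun k ↦ f (2 * k + 1) :=
      hf.summable.comp_injective fun i j h ↦ by omega
    rw [← (heven.even_add_odd hs.hasSum).unique hf, add_sub_cancel_left]
    exact hs.hasSum
  have h := HasSum.even_add_odd (f := fun n ↦ (-1) ^ n * f n)
    (by simpa [pow_mul] using heven) (by simpa [pow_succ, pow_mul] using hodd.neg)
  convert h using 1
  ring

theorem hasSum_neg_one_pow_div_succ_sq :
    HasSum (fun n : ℕ ↦ (-1) ^ n / ((n : ℝ) + 1) ^ 2) (π ^ 2 / 12) := by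
  have heven : HasSum (fun k : ℕ ↦ 1 / ((2 * k : ℕ) : ℝ) ^ 2) (π ^ 2 / 24) := by
    rw [show π ^ 2 / 24 = 1 / 4 * (π ^ 2 / 6) by ring]
    refine (hasSum_zeta_two.mul_left (1 / 4)).congr_fun fun k ↦ ?_
    push_cast
    ring
  have h := hasSum_neg_one_pow_mul_of_hasSum_even hasSum_zeta_two heven
  rw [← hasSum_nat_add_iff' 1] at h
  -- the dropped `n = 0` term of `hasSum_zeta_two` is the junk value `1 / 0 = 0`
  have hval : -(2 * (π ^ 2 / 24) - π ^ 2 / 6 -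
      ∑ i ∈ Finset.range 1, (-1) ^ i * (1 / (i : ℝ) ^ 2)) = π ^ 2 / 12 := by
    simp only [Finset.sum_range_one, Nat.cast_zero, ne_eq, OfNat.ofNat_ne_zero,
      not_false_eq_true, zero_pow, div_zero, mul_zero, sub_zero]
    ring
  refine hval ▸ h.neg.congr_fun fun n ↦ ?_
  push_cast
  ring

theorem summable_one_div_nat_add_one_sq : Summable fun n : ℕ ↦ 1 / ((n : ℝ) + 1) ^ 2 := by
  exact_mod_cast (summable_nat_add_iff 1).mpr (Real.summable_one_div_nat_pow.mpr one_lt_two)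

theorem hasSum_integral_of_norm_le_pow_div {f : ℕ → ℝ → ℝ} {g : ℝ → ℝ}
    (hf : ∀ n, IntervalIntegrable (f n) volume 0 1)
    (hbound : ∀ n, ∀ t ∈ Ioo (0 : ℝ) 1, ‖f n t‖ ≤ t ^ n / (n + 1))
    (hg : ∀ t ∈ Ioo (0 : ℝ) 1, HasSum (fun n ↦ f n t) (g t)) :
    HasSum (fun n ↦ ∫ t in (0 : ℝ)..1, f n t) (∫ t in (0 : ℝ)..1, g t) := by
  have hf' : ∀ n, IntegrableOn (f n) (Ioo 0 1) := fun n ↦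
    (intervalIntegrable_iff_integrableOn_Ioo_of_le zero_le_one).mp (hf n)
  have hnorm : ∀ n : ℕ, ∫ t in Ioo (0 : ℝ) 1, ‖f n t‖ ≤ 1 / ((n : ℝ) + 1) ^ 2 := fun n ↦ calc
    _ ≤ ∫ t in Ioo (0 : ℝ) 1, t ^ n / (n + 1) :=
      setIntegral_mono_on (hf' n).norm
        (((continuous_pow n).div_const _).integrableOn_Icc.mono_set Ioo_subset_Icc_self)
        measurableSet_Ioo (hbound n)
    _ = 1 / ((n : ℝ) + 1) ^ 2 := by
      rw [← integral_Ioc_eq_integral_Ioo, ← integral_of_le zero_le_one,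
        intervalIntegral.integral_div, integral_pow]
      field_simp
      simp
  have h := hasSum_integral_of_summable_integral_norm hf' <|
    summable_one_div_nat_add_one_sq.of_nonneg_of_le
      (fun n ↦ integral_nonneg fun t ↦ norm_nonneg _) hnorm
  simp only [integral_of_le zero_le_one, integral_Ioc_eq_integral_Ioo]
  rwa [setIntegral_congr_fun measurableSet_Ioo fun t ht ↦ (hg t ht).tsum_eq] at h

theorem hasSum_neg_one_pow_div_mul_pow {t : ℝ} (ht₀ : t ≠ 0) (ht : |t| < 1) :
    HasSum (fun n : ℕ ↦ (-1) ^ n / (n + 1) * t ^ n) (log (1 + t) / t) := by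
  have h := (hasSum_pow_div_log_of_abs_lt_one (x := -t) (by rwa [abs_neg])).div_const (-t)
  rw [sub_neg_eq_add, neg_div_neg_eq] at h
  refine h.congr_fun fun n ↦ ?_
  rw [pow_succ, neg_pow t]
  field_simp

theorem hasSum_integral_mul_log_one_add_div_self {w : ℝ → ℝ} (hw : ContinuousOn w (Icc 0 1))
    (hw₁ : ∀ t ∈ Ioo (0 : ℝ) 1, |w t| ≤ 1) :
    HasSum (fun n : ℕ ↦ (-1) ^ n / (n + 1) * ∫ t in (0 : ℝ)..1, t ^ n * w t)
      (∫ t in (0 : ℝ)..1, log (1 + t) / t * w t) := by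
  simp_rw [← intervalIntegral.integral_const_mul]
  refine hasSum_integral_of_norm_le_pow_div (fun n ↦ ?_) (fun n t ht ↦ ?_) fun t ht ↦ ?_
  · rw [← uIcc_of_le zero_le_one] at hw
    exact (continuousOn_const.mul ((continuousOn_pow n).mul hw)).intervalIntegrable
  · calc ‖(-1) ^ n / (n + 1) * (t ^ n * w t)‖ = t ^ n / (n + 1) * |w t| := by
          simp only [norm_mul, norm_div, norm_pow, norm_neg, norm_one, one_pow, norm_eq_abs,
            abs_of_pos ht.1, abs_of_pos (n.cast_add_one_pos (α := ℝ))]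
          ring
      _ ≤ t ^ n / (n + 1) := mul_le_of_le_one_right (by have := ht.1; positivity) (hw₁ t ht)
  · have ht' : |t| < 1 := by rw [abs_of_pos ht.1]; exact ht.2
    exact ((hasSum_neg_one_pow_div_mul_pow ht.1.ne' ht').mul_right (w t)).congr_fun
      fun n ↦ (mul_assoc _ _ _).symm

theorem intervalIntegrable_log_one_add_div_self :
    IntervalIntegrable (fun t ↦ log (1 + t) / t) volume 0 1 := by
  refine (intervalIntegrable_iff_integrableOn_Ioo_of_le zero_le_one).mpr <|
    Measure.integrableOn_of_bounded (M := 1) (by simp)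
      (Measurable.aestronglyMeasurable (by fun_prop)) ?_
  filter_upwards [self_mem_ae_restrict measurableSet_Ioo] with t ht
  have hlog : 0 ≤ log (1 + t) := log_nonneg (by linarith [ht.1])
  rw [norm_of_nonneg (div_nonneg hlog ht.1.le), div_le_one ht.1]
  linarith [log_le_sub_one_of_pos (x := 1 + t) (by linarith [ht.1])]

theorem integral_log_one_add_div_self :
    ∫ t in (0 : ℝ)..1, log (1 + t) / t = π ^ 2 / 12 := by
  have h := hasSum_integral_mul_log_one_add_div_self (w := fun _ ↦ 1) continuousOn_const
    (by simp)
  simp only [mul_one, integral_pow] at h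
  refine h.unique (hasSum_neg_one_pow_div_succ_sq.congr_fun fun n ↦ ?_)
  field_simp
  simp

theorem integral_log_one_add_div_one_add :
    ∫ t in (0 : ℝ)..1, log (1 + t) / (1 + t) = log 2 ^ 2 / 2 := by
  rw [intervalIntegral.integral_comp_add_left (fun x ↦ log x / x), add_zero, one_add_one_eq_two]
  have hpos : ∀ x ∈ uIcc (1 : ℝ) 2, x ≠ 0 := fun x hx ↦ by
    rw [uIcc_of_le one_le_two] at hx
    linarith [hx.1]
  have hderiv : ∀ x ∈ uIcc (1 : ℝ) 2, HasDerivAt (fun x ↦ log x ^ 2 / 2) (log x / x) x :=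
    fun x hx ↦ (((hasDerivAt_log (hpos x hx)).fun_pow 2).div_const 2).congr_deriv
      (by field_simp; norm_num)
  rw [integral_eq_sub_of_hasDerivAt hderiv
    ((continuousOn_log.mono fun x hx ↦ hpos x hx).div continuousOn_id hpos).intervalIntegrable]
  simp

theorem integral_log_one_add_div_self_mul_one_div_one_add :
    ∫ t in (0 : ℝ)..1, log (1 + t) / t * (1 / (1 + t)) = π ^ 2 / 12 - log 2 ^ 2 / 2 := by
  have hpos : ∀ t ∈ uIcc (0 : ℝ) 1, 1 + t ≠ 0 := fun t ht ↦ by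
    rw [uIcc_of_le zero_le_one] at ht
    linarith [ht.1]
  have hsplit : EqOn (fun t ↦ log (1 + t) / t * (1 / (1 + t)))
      (fun t ↦ log (1 + t) / t - log (1 + t) / (1 + t)) (uIcc 0 1) := by
    intro t ht
    have := hpos t ht
    rw [uIcc_of_le zero_le_one] at ht
    rcases ht.1.eq_or_lt with rfl | ht₀
    · simp -- at `t = 0` both sides are junk values `log 1 / 0 = 0`
    · field_simp
      ring
  have hint : IntervalIntegrable (fun t ↦ log (1 + t) / (1 + t)) volume 0 1 :=
    ((ContinuousOn.log (by fun_prop) hpos).div (by fun_prop) hpos).intervalIntegrable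
  rw [integral_congr hsplit, integral_sub intervalIntegrable_log_one_add_div_self hint,
    integral_log_one_add_div_self, integral_log_one_add_div_one_add]

theorem intervalIntegrable_pow_div_one_add (n : ℕ) :
    IntervalIntegrable (fun t : ℝ ↦ t ^ n / (1 + t)) volume 0 1 := by
  refine ContinuousOn.intervalIntegrable (.div (by fun_prop) (by fun_prop) fun t ht ↦ ?_)
  rw [uIcc_of_le zero_le_one] at ht
  linarith [ht.1]

theorem integral_pow_div_one_add_add_succ (n : ℕ) :
    ((∫ t in (0 : ℝ)..1, t ^ n / (1 + t)) + ∫ t in (0 : ℝ)..1, t ^ (n + 1) / (1 + t)) =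
      1 / (n + 1) := by
  rw [← integral_add (intervalIntegrable_pow_div_one_add n)
    (intervalIntegrable_pow_div_one_add (n + 1))]
  have h : EqOn (fun t : ℝ ↦ t ^ n / (1 + t) + t ^ (n + 1) / (1 + t)) (fun t ↦ t ^ n)
      (uIcc 0 1) := by
    intro t ht
    rw [uIcc_of_le zero_le_one] at ht
    have : 1 + t ≠ 0 := by linarith [ht.1]
    field_simp
    ring
  rw [integral_congr h, integral_pow]
  norm_num

theorem log_two_sub_skewH (n : ℕ) :
    log 2 - skewH n = (-1) ^ n * ∫ t in (0 : ℝ)..1, t ^ n / (1 + t) := by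
  induction n with
  | zero => norm_num [skewH]
  | succ n ih =>
    rw [skewH, Finset.sum_range_succ, ← skewH, pow_succ]
    linear_combination ih + (-1 : ℝ) ^ n * integral_pow_div_one_add_add_succ n

theorem stmt13 :
    ∑' n : ℕ, (Real.log 2 - skewH n) / ((n : ℝ) + 1) =
      Real.pi ^ 2 / 12 - (Real.log 2) ^ 2 / 2 := by
  have hw : ContinuousOn (fun t : ℝ ↦ 1 / (1 + t)) (Icc 0 1) :=
    continuousOn_const.div (by fun_prop) fun t ht ↦ by linarith [ht.1]
  have h := hasSum_integral_mul_log_one_add_div_self hw fun t ht ↦ by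
    have := ht.1
    rw [abs_of_pos (by positivity), div_le_one (by positivity)]
    linarith
  rw [integral_log_one_add_div_self_mul_one_div_one_add] at h
  refine (h.congr_fun fun n ↦ ?_).tsum_eq
  rw [log_two_sub_skewH]
  simp_rw [mul_one_div]
  ring
end

section
/- For every real β with |β| ≤ 1 and every natural p ≥ 0, ∫₀¹ (log x)^p · log((1-βx)/(1+βx)) / x dx = (-1)^{p+1} p! (Li_{p+2}(β) - Li_{p+2}(-β)). -/
open MeasureTheory Real

noncomputable def Li (q : ℕ) (x : ℝ) : ℝ := ∑' n : ℕ, x ^ (n + 1) / ((n : ℝ) + 1) ^ q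

/-!
Substituting `x = exp (-t)` turns `∫₀¹ xⁿ (log x)ᵖ dx` into a Gamma integral, with value
`(-1)ᵖ p! / (n + 1)ᵖ⁺¹`. Subtracting the series of `-log (1 - βx)` from that of `-log (1 + βx)`
expands `log ((1 - βx) / (1 + βx)) / x` as `∑ₙ ((-β)ⁿ⁺¹ - βⁿ⁺¹) / (n + 1) · xⁿ` on `(0, 1)`.
For `|β| ≤ 1` the integrals of the absolute values of the terms are dominated by a convergent
polylogarithm series, so the series may be integrated termwise, which produces
`(-1)ᵖ p! (Li_{p+2}(-β) - Li_{p+2}(β))`.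
-/

open Set

lemma image_exp_neg_Ioi : (fun t : ℝ => exp (-t)) '' Ioi 0 = Ioo 0 1 := by
  ext x
  constructor
  · rintro ⟨t, ht, rfl⟩
    exact ⟨exp_pos _, exp_lt_one_iff.mpr (neg_lt_zero.mpr ht)⟩
  · rintro ⟨hx0, hx1⟩
    exact ⟨-log x, neg_pos.mpr (log_neg hx0 hx1), by simp [exp_log hx0]⟩

lemma abs_deriv_exp_neg_smul_pow_mul_log_pow (n p : ℕ) (t : ℝ) :
    |exp (-t) * -1| • (exp (-t) ^ n * log (exp (-t)) ^ p)
      = (-1) ^ p * (t ^ p * exp (-((n + 1) * t))) := by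
  rw [abs_mul, abs_neg, abs_one, mul_one, abs_of_pos (exp_pos _), log_exp, smul_eq_mul,
    ← exp_nat_mul, neg_pow, show -((n + 1) * t) = -t + n * -t by ring, exp_add]
  ring

lemma integrableOn_pow_mul_log_pow (n p : ℕ) :
    IntegrableOn (fun x : ℝ => x ^ n * log x ^ p) (Ioo 0 1) := by
  rw [← image_exp_neg_Ioi, integrableOn_image_iff_integrableOn_abs_deriv_smul measurableSet_Ioi
    (fun t _ => (hasDerivAt_neg t).exp.hasDerivWithinAt) (exp_injective.comp neg_injective).injOn]
  have hGamma : IntegrableOn (fun t : ℝ => t ^ (p : ℝ) * exp (-(n + 1) * t ^ (1 : ℝ))) (Ioi 0) :=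
    integrableOn_rpow_mul_exp_neg_mul_rpow (by linarith [p.cast_nonneg (α := ℝ)]) one_pos
      (by positivity)
  refine IntegrableOn.congr_fun (hGamma.const_mul ((-1) ^ p)) (fun t _ => ?_) measurableSet_Ioi
  simp only [abs_deriv_exp_neg_smul_pow_mul_log_pow, rpow_natCast, rpow_one, neg_mul]

lemma integral_pow_mul_log_pow (n p : ℕ) :
    ∫ x in Ioo (0 : ℝ) 1, x ^ n * log x ^ p = (-1) ^ p * p.factorial / ((n : ℝ) + 1) ^ (p + 1) := by
  rw [← image_exp_neg_Ioi, integral_image_eq_integral_abs_deriv_smul measurableSet_Ioi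
    (fun t _ => (hasDerivAt_neg t).exp.hasDerivWithinAt) (exp_injective.comp neg_injective).injOn]
  have hGamma : ∫ t in Ioi (0 : ℝ), t ^ p * exp (-((n + 1) * t))
      = p.factorial / ((n : ℝ) + 1) ^ (p + 1) := by
    have h := integral_rpow_mul_exp_neg_mul_Ioi (a := p + 1) (r := n + 1) (by positivity)
      (by positivity)
    rw [add_sub_cancel_right, Gamma_nat_eq_factorial, ← Nat.cast_succ p] at h
    simp only [rpow_natCast] at h
    rw [h, div_pow, one_pow, one_div_mul_eq_div]
  simp only [abs_deriv_exp_neg_smul_pow_mul_log_pow, integral_const_mul, hGamma]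
  ring

lemma integral_norm_pow_mul_log_pow (n p : ℕ) :
    ∫ x in Ioo (0 : ℝ) 1, ‖x ^ n * log x ^ p‖ = p.factorial / ((n : ℝ) + 1) ^ (p + 1) := by
  have hsign : EqOn (fun x : ℝ => ‖x ^ n * log x ^ p‖) (fun x => (-1) ^ p * (x ^ n * log x ^ p))
      (Ioo 0 1) := fun x hx => by
    dsimp only
    rw [norm_mul, norm_pow, norm_pow, Real.norm_of_nonneg hx.1.le, Real.norm_eq_abs,
      abs_of_neg (log_neg hx.1 hx.2), neg_pow]
    ring
  rw [setIntegral_congr_fun measurableSet_Ioo hsign, integral_const_mul, integral_pow_mul_log_pow,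
    ← mul_div_assoc, ← mul_assoc, ← mul_pow]
  norm_num

theorem integral_log_pow_mul_of_hasSum {c : ℕ → ℝ} {f : ℝ → ℝ} (p : ℕ)
    (hf : ∀ x ∈ Ioo (0 : ℝ) 1, HasSum (fun n => c n * x ^ n) (f x))
    (hc : Summable fun n : ℕ => |c n| / ((n : ℝ) + 1) ^ (p + 1)) :
    ∫ x in (0 : ℝ)..1, log x ^ p * f x
      = (-1) ^ p * p.factorial * ∑' n : ℕ, c n / ((n : ℝ) + 1) ^ (p + 1) := by
  set F : ℕ → ℝ → ℝ := fun n x => c n * (x ^ n * log x ^ p)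
  have hF_int (n : ℕ) : IntegrableOn (F n) (Ioo 0 1) :=
    (integrableOn_pow_mul_log_pow n p).const_mul (c n)
  have hF_norm (n : ℕ) :
      ∫ x in Ioo (0 : ℝ) 1, ‖F n x‖ = p.factorial * (|c n| / ((n : ℝ) + 1) ^ (p + 1)) := by
    simp only [F, norm_mul (c n)]
    rw [integral_const_mul, integral_norm_pow_mul_log_pow, Real.norm_eq_abs]
    ring
  have hsum := hasSum_integral_of_summable_integral_norm hF_int
    (by simpa only [hF_norm] using hc.mul_left _)
  have hF_tsum : EqOn (fun x => log x ^ p * f x) (fun x => ∑' n, F n x) (Ioo 0 1) := fun x hx => by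
    dsimp only
    rw [← ((hf x hx).mul_left (log x ^ p)).tsum_eq]
    exact tsum_congr fun n => by rw [mul_comm, mul_assoc]
  rw [intervalIntegral.integral_of_le zero_le_one, integral_Ioc_eq_integral_Ioo,
    setIntegral_congr_fun measurableSet_Ioo hF_tsum, ← hsum.tsum_eq, ← tsum_mul_left]
  refine tsum_congr fun n => ?_
  simp only [F, integral_const_mul, integral_pow_mul_log_pow]
  ring

lemma hasSum_Li {q : ℕ} (hq : 2 ≤ q) {x : ℝ} (hx : |x| ≤ 1) :
    HasSum (fun n : ℕ => x ^ (n + 1) / ((n : ℝ) + 1) ^ q) (Li q x) := by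
  have hpseries : Summable fun n : ℕ => 1 / ((n : ℝ) + 1) ^ q := by
    simpa using (summable_nat_add_iff 1).mpr (Real.summable_one_div_nat_pow.mpr hq)
  refine (Summable.of_norm_bounded hpseries fun n => ?_).hasSum
  rw [norm_div, norm_pow, norm_pow, Real.norm_of_nonneg (by positivity : (0 : ℝ) ≤ n + 1)]
  gcongr
  exact pow_le_one₀ (norm_nonneg x) hx

lemma hasSum_log_one_sub_div_one_add_div {β x : ℝ} (hx : x ≠ 0) (hβx : |β * x| < 1) :
    HasSum (fun n : ℕ => ((-β) ^ (n + 1) - β ^ (n + 1)) / (n + 1) * x ^ n)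
      (log ((1 - β * x) / (1 + β * x)) / x) := by
  have hβx_bounds := abs_lt.mp hβx
  have hlog := ((hasSum_pow_div_log_of_abs_lt_one (x := -(β * x)) (by rwa [abs_neg])).sub
    (hasSum_pow_div_log_of_abs_lt_one hβx)).div_const x
  have hterms : (fun n : ℕ => ((-β) ^ (n + 1) - β ^ (n + 1)) / (n + 1) * x ^ n)
      = fun n : ℕ => ((-(β * x)) ^ (n + 1) / (n + 1) - (β * x) ^ (n + 1) / (n + 1)) / x := by
    funext n
    rw [← neg_mul, mul_pow, mul_pow, pow_succ x]
    field_simp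
  have hvalue : log ((1 - β * x) / (1 + β * x)) = -log (1 - -(β * x)) - -log (1 - β * x) := by
    rw [log_div (by linarith) (by linarith)]
    simp only [sub_neg_eq_add]
    ring
  rwa [hterms, hvalue]

theorem stmt14 (β : ℝ) (h : |β| ≤ 1) (p : ℕ) :
    ∫ x in (0:ℝ)..1, (Real.log x) ^ p * Real.log ((1 - β * x) / (1 + β * x)) / x =
      (-1) ^ (p + 1) * (Nat.factorial p : ℝ) * (Li (p + 2) β - Li (p + 2) (-β)) := by
  have hLi := (hasSum_Li (q := p + 2) (by omega) (by rwa [abs_neg])).sub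
    (hasSum_Li (q := p + 2) (by omega) h)
  have hterm (n : ℕ) : ((-β) ^ (n + 1) - β ^ (n + 1)) / (n + 1) / ((n : ℝ) + 1) ^ (p + 1)
      = (-β) ^ (n + 1) / ((n : ℝ) + 1) ^ (p + 2) - β ^ (n + 1) / ((n : ℝ) + 1) ^ (p + 2) := by
    rw [div_div, ← pow_succ', sub_div]
  have hpower (x : ℝ) (hx : x ∈ Ioo 0 1) := hasSum_log_one_sub_div_one_add_div (β := β) hx.1.ne' (by
    rw [abs_mul, abs_of_pos hx.1]; exact (mul_le_of_le_one_left hx.1.le h).trans_lt hx.2)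
  simp_rw [mul_div_assoc]
  rw [integral_log_pow_mul_of_hasSum p hpower, tsum_congr hterm, hLi.tsum_eq]
  · ring
  · refine hLi.summable.abs.congr fun n => ?_
    rw [← hterm, abs_div, abs_of_pos (by positivity : (0 : ℝ) < ((n : ℝ) + 1) ^ (p + 1))]
end
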